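/- Let N ≥ 1, let M and Q be real symmetric N×N matrices with Q negative semidefinite (i.e. xᵀQx ≤ 0 for all x ∈ ℝᴺ). Regard M and Q as complex matrices. If ω ∈ ℂ is such that the complex matrix i·ω·I − i·M − Q is singular (i.e. det(i·ω·I − i·M − Q) = 0), then Im(ω) ≥ 0. -/
import Mathlib
open Matrix

lemma aux_re_im (N : ℕ) (R : Matrix (Fin N) (Fin N) ℝ) (v : Fin N → ℂ) :
    star v ⬝ᵥ (R.map Complex.ofReal *ᵥ v) =
      Complex.mk ((fun i => (v i).re) ⬝ᵥ R *ᵥ (fun i => (v i).re)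
          + (fun i => (v i).im) ⬝ᵥ R *ᵥ (fun i => (v i).im))
        ((fun i => (v i).re) ⬝ᵥ R *ᵥ (fun i => (v i).im)
          - (fun i => (v i).im) ⬝ᵥ R *ᵥ (fun i => (v i).re)) := by
  refine Complex.ext ?_ ?_
  · simp only [dotProduct, mulVec, map_apply, Pi.star_apply, Complex.re_sum, Complex.im_sum,
      Complex.mul_re, Complex.mul_im, Finset.mul_sum, Finset.sum_mul, Complex.ofReal_re,
      Complex.ofReal_im, RCLike.star_def, Complex.conj_re, Complex.conj_im]
    rw [← Finset.sum_add_distrib]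
    refine Finset.sum_congr rfl fun i _ => ?_
    rw [← Finset.sum_add_distrib]
    exact Finset.sum_congr rfl fun j _ => by ring
  · simp only [dotProduct, mulVec, map_apply, Pi.star_apply, Complex.re_sum, Complex.im_sum,
      Complex.mul_re, Complex.mul_im, Finset.mul_sum, Finset.sum_mul, Complex.ofReal_re,
      Complex.ofReal_im, RCLike.star_def, Complex.conj_re, Complex.conj_im]
    rw [← Finset.sum_sub_distrib]
    refine Finset.sum_congr rfl fun i _ => ?_
    rw [← Finset.sum_sub_distrib]
    exact Finset.sum_congr rfl fun j _ => by ring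

lemma aux_sym_dot (N : ℕ) (R : Matrix (Fin N) (Fin N) ℝ) (hR : R.IsSymm)
    (a b : Fin N → ℝ) : a ⬝ᵥ R *ᵥ b = b ⬝ᵥ R *ᵥ a := by
  rw [dotProduct_mulVec, ← mulVec_transpose, hR.eq, dotProduct_comm]

lemma aux_sym_real (N : ℕ) (R : Matrix (Fin N) (Fin N) ℝ) (hR : R.IsSymm) (v : Fin N → ℂ) :
    star v ⬝ᵥ (R.map Complex.ofReal *ᵥ v) =
      (((fun i => (v i).re) ⬝ᵥ R *ᵥ (fun i => (v i).re)
          + (fun i => (v i).im) ⬝ᵥ R *ᵥ (fun i => (v i).im) : ℝ) : ℂ) := by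
  rw [aux_re_im]
  refine Complex.ext ?_ ?_
  · simp
  · simp [aux_sym_dot N R hR]

theorem stmt19 (N : ℕ) (hN : 1 ≤ N)
    (M Q : Matrix (Fin N) (Fin N) ℝ)
    (hM : M.IsSymm) (hQ : Q.IsSymm)
    (hQns : ∀ x : Fin N → ℝ, x ⬝ᵥ Q *ᵥ x ≤ 0)
    (ω : ℂ)
    (hsing : ((Complex.I * ω) • (1 : Matrix (Fin N) (Fin N) ℂ)
        - Complex.I • (M.map (Complex.ofReal))
        - Q.map (Complex.ofReal)).det = 0) :
    0 ≤ ω.im := by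
  obtain ⟨v, hv, hAv⟩ := (Matrix.exists_mulVec_eq_zero_iff).2 hsing
  set a : Fin N → ℝ := fun i => (v i).re with ha
  set b : Fin N → ℝ := fun i => (v i).im with hb
  have h0 : star v ⬝ᵥ (((Complex.I * ω) • (1 : Matrix (Fin N) (Fin N) ℂ)
        - Complex.I • (M.map (Complex.ofReal))
        - Q.map (Complex.ofReal)) *ᵥ v) = 0 := by
    rw [hAv, dotProduct_zero]
  rw [sub_mulVec, sub_mulVec, smul_mulVec, smul_mulVec, one_mulVec,
    dotProduct_sub, dotProduct_sub, dotProduct_smul, dotProduct_smul] at h0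
  -- identify the three scalar products
  have hId : (1 : Matrix (Fin N) (Fin N) ℝ).map Complex.ofReal = 1 :=
    Matrix.map_one _ Complex.ofReal_zero Complex.ofReal_one
  have hn : star v ⬝ᵥ v = ((a ⬝ᵥ a + b ⬝ᵥ b : ℝ) : ℂ) := by
    have h := aux_sym_real N 1 (Matrix.isSymm_one) v
    rw [hId, one_mulVec] at h
    simpa [one_mulVec] using h
  have hSM := aux_sym_real N M hM v
  have hSQ := aux_sym_real N Q hQ v
  have hq : (a ⬝ᵥ Q *ᵥ a + b ⬝ᵥ Q *ᵥ b : ℝ) ≤ 0 := add_nonpos (hQns a) (hQns b)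
  have hp : 0 < (a ⬝ᵥ a + b ⬝ᵥ b : ℝ) := by
    obtain ⟨i0, hi0⟩ := Function.ne_iff.mp hv
    have : (a ⬝ᵥ a + b ⬝ᵥ b : ℝ) = ∑ i, (a i * a i + b i * b i) := by
      rw [dotProduct, dotProduct, ← Finset.sum_add_distrib]
    rw [this]
    refine Finset.sum_pos' (fun i _ => add_nonneg (mul_self_nonneg _) (mul_self_nonneg _)) ⟨i0, Finset.mem_univ _, ?_⟩
    have := Complex.normSq_pos.mpr hi0
    simpa [Complex.normSq_apply, ha, hb] using this
  rw [hn, hSM, hSQ, smul_eq_mul, smul_eq_mul] at h0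
  have hre := congrArg Complex.re h0
  simp only [Complex.sub_re, Complex.mul_re, Complex.mul_im, Complex.I_re, Complex.I_im,
    Complex.ofReal_re, Complex.ofReal_im, Complex.zero_re] at hre
  nlinarith [hp, hq, hre]
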